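/- arXiv:math/0308041 — 4 statements merged into one kernel-verified Lean document; each statement's English description precedes it below -/
import Mathlib

section
/- The logarithmic Mahler measure of the polynomial x + y − 1 satisfies 2π · m(x + y − 1) = D(e^{iπ/3}) − D(e^{−iπ/3}), where D is the Bloch–Wigner dilogarithm. -/
open scoped Real

/-- The logarithmic Mahler measure of a two-variable (Laurent) polynomial expression,
given as a function `ℂ → ℂ → ℂ`:
`m(P) = (2π)⁻² ∫₀^{2π} ∫₀^{2π} log |P(e^{iθ}, e^{iφ})| dθ dφ`. -/
noncomputable def mahlerMeasure2 (P : ℂ → ℂ → ℂ) : ℝ :=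
  (1 / (2 * π) ^ 2) *
    ∫ θ in (0:ℝ)..(2 * π), ∫ φ in (0:ℝ)..(2 * π),
      Real.log ‖P (Complex.exp (θ * Complex.I)) (Complex.exp (φ * Complex.I))‖

/-- The dilogarithm `Li₂`, the analytic continuation of `∑_{n ≥ 1} zⁿ / n²`
(which is given for `|z| ≤ 1`), via the classical integral formula
`Li₂(z) = -∫₀¹ log(1 - z t) / t dt` (principal branch). -/
noncomputable def Li2 (z : ℂ) : ℂ :=
  -∫ t in (0:ℝ)..1, Complex.log (1 - z * t) / t

/-- The Bloch–Wigner dilogarithm `D(z) = Im(Li₂(z)) + arg(1 - z) · log |z|`. -/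
noncomputable def blochWigner (z : ℂ) : ℝ :=
  (Li2 z).im + (1 - z).arg * Real.log ‖z‖

/-!
Integrating over `y` first, Jensen's formula `∫ log |a + e^{iφ}| dφ = 2π log⁺ |a|` gives
`2π m(x + y - 1) = ∫₀^{2π} log⁺ |1 - e^{iθ}| dθ = ∫_{π/3}^{5π/3} log |1 - e^{iθ}| dθ`,
as `|1 - e^{iθ}|² = 2 - 2 cos θ`. Differentiating `Li₂(z) = -∫₀¹ log(1 - zt)/t dt` under the
integral sign gives `Li₂'(z) = -log(1 - z)/z`, hence `d/dθ Im Li₂(e^{iθ}) = -log |1 - e^{iθ}|`,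
and the last integral is `Im Li₂(e^{iπ/3}) - Im Li₂(e^{5iπ/3})`. On the unit circle `D = Im Li₂`.
-/

open Complex MeasureTheory intervalIntegral
open scoped Interval

theorem integral_log_norm_add_exp_mul_I (a : ℂ) :
    ∫ φ in (0:ℝ)..2 * π, Real.log ‖a + exp (φ * I)‖ = 2 * π * log⁺ ‖a‖ := by
  have h := circleAverage_log_norm_add_const_eq_posLog (a := a)
  rw [Real.circleAverage_def, smul_eq_mul, inv_mul_eq_iff_eq_mul₀ (by positivity)] at h
  simpa [circleMap_zero, add_comm] using h

theorem mahlerMeasure2_add_right (f : ℂ → ℂ) :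
    mahlerMeasure2 (fun x y => f x + y) =
      (2 * π)⁻¹ * ∫ θ in (0:ℝ)..2 * π, log⁺ ‖f (exp (θ * I))‖ := by
  simp only [mahlerMeasure2, integral_log_norm_add_exp_mul_I, intervalIntegral.integral_const_mul,
    ← mul_assoc]
  congr 1
  field_simp

theorem norm_one_sub_exp_mul_I_sq (θ : ℝ) : ‖1 - exp (θ * I)‖ ^ 2 = 2 - 2 * Real.cos θ := by
  rw [Complex.sq_norm, Complex.normSq_apply]
  simp only [sub_re, sub_im, one_re, one_im, exp_ofReal_mul_I_re, exp_ofReal_mul_I_im]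
  nlinarith [Real.sin_sq_add_cos_sq θ]

theorem posLog_norm_one_sub_exp_mul_I_of_half_le_cos {θ : ℝ} (h : 1 / 2 ≤ Real.cos θ) :
    log⁺ ‖1 - exp (θ * I)‖ = 0 := by
  rw [Real.posLog_eq_zero_iff, abs_norm]
  nlinarith [norm_one_sub_exp_mul_I_sq θ, norm_nonneg (1 - exp (θ * I))]

theorem posLog_norm_one_sub_exp_mul_I_of_cos_le_half {θ : ℝ} (h : Real.cos θ ≤ 1 / 2) :
    log⁺ ‖1 - exp (θ * I)‖ = Real.log ‖1 - exp (θ * I)‖ := by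
  refine Real.posLog_eq_log ?_
  rw [abs_norm]
  nlinarith [norm_one_sub_exp_mul_I_sq θ, norm_nonneg (1 - exp (θ * I))]

theorem Real.half_le_cos_of_abs_le {θ : ℝ} (h : |θ| ≤ π / 3) : 1 / 2 ≤ Real.cos θ := by
  rw [← Real.cos_abs, ← Real.cos_pi_div_three]
  exact Real.cos_le_cos_of_nonneg_of_le_pi (abs_nonneg θ) (by linarith [Real.pi_pos]) h

theorem Real.cos_le_half_of_mem_Icc {θ : ℝ} (h : θ ∈ Set.Icc (π / 3) (5 * π / 3)) :
    Real.cos θ ≤ 1 / 2 := by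
  rw [← Real.cos_pi_div_three]
  rcases le_total θ π with hθ | hθ
  · exact Real.cos_le_cos_of_nonneg_of_le_pi (by positivity) hθ h.1
  · rw [← Real.cos_two_pi_sub]
    exact Real.cos_le_cos_of_nonneg_of_le_pi (by positivity) (by linarith) (by linarith [h.2])

theorem integral_posLog_norm_one_sub_exp_mul_I :
    ∫ θ in (0:ℝ)..2 * π, log⁺ ‖1 - exp (θ * I)‖ =
      ∫ θ in (π / 3)..(5 * π / 3), Real.log ‖1 - exp (θ * I)‖ := by
  have hπ := Real.pi_pos
  have hint (a b : ℝ) : IntervalIntegrable (fun θ : ℝ => log⁺ ‖1 - exp (θ * I)‖) volume a b :=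
    Continuous.intervalIntegrable (by fun_prop) a b
  rw [← integral_add_adjacent_intervals (hint 0 (5 * π / 3)) (hint _ (2 * π)),
    ← integral_add_adjacent_intervals (hint 0 (π / 3)) (hint _ (5 * π / 3))]
  have hleft : ∫ θ in (0:ℝ)..π / 3, log⁺ ‖1 - exp (θ * I)‖ = 0 := by
    rw [integral_congr (g := fun _ => 0) fun θ hθ => ?_, intervalIntegral.integral_zero]
    rw [Set.uIcc_of_le (by positivity)] at hθ
    exact posLog_norm_one_sub_exp_mul_I_of_half_le_cos
      (Real.half_le_cos_of_abs_le (abs_le.2 ⟨by linarith [hθ.1], hθ.2⟩))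
  have hright : ∫ θ in (5 * π / 3)..2 * π, log⁺ ‖1 - exp (θ * I)‖ = 0 := by
    rw [integral_congr (g := fun _ => 0) fun θ hθ => ?_, intervalIntegral.integral_zero]
    rw [Set.uIcc_of_le (by linarith)] at hθ
    refine posLog_norm_one_sub_exp_mul_I_of_half_le_cos ?_
    rw [← Real.cos_sub_two_pi]
    exact Real.half_le_cos_of_abs_le (abs_le.2 ⟨by linarith [hθ.1], by linarith [hθ.2]⟩)
  have hmid : ∫ θ in (π / 3)..(5 * π / 3), log⁺ ‖1 - exp (θ * I)‖ =
      ∫ θ in (π / 3)..(5 * π / 3), Real.log ‖1 - exp (θ * I)‖ := by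
    refine integral_congr fun θ hθ => ?_
    rw [Set.uIcc_of_le (by linarith)] at hθ
    exact posLog_norm_one_sub_exp_mul_I_of_cos_le_half (Real.cos_le_half_of_mem_Icc hθ)
  rw [hleft, hright, hmid, zero_add, add_zero]

section

variable {w : ℂ} {ε t : ℝ}

theorem le_re_one_sub_mul_ofReal (hε1 : ε ≤ 1) (hw : w.re ≤ 1 - ε) (ht : t ∈ Set.Icc (0:ℝ) 1) :
    ε ≤ (1 - w * t).re := by
  simp only [sub_re, one_re, re_mul_ofReal]
  nlinarith [ht.1, ht.2]

theorem le_norm_one_sub_mul_ofReal (hε1 : ε ≤ 1) (hw : w.re ≤ 1 - ε) (ht : t ∈ Set.Icc (0:ℝ) 1) :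
    ε ≤ ‖1 - w * t‖ :=
  (le_re_one_sub_mul_ofReal hε1 hw ht).trans (re_le_norm _)

theorem one_sub_mul_ofReal_mem_slitPlane (hε : 0 < ε) (hε1 : ε ≤ 1) (hw : w.re ≤ 1 - ε)
    (ht : t ∈ Set.Icc (0:ℝ) 1) : 1 - w * t ∈ slitPlane :=
  mem_slitPlane_iff.2 <| .inl <| hε.trans_le (le_re_one_sub_mul_ofReal hε1 hw ht)

theorem norm_log_one_sub_mul_ofReal_le (hε : 0 < ε) (hε1 : ε ≤ 1) (hw : w.re ≤ 1 - ε)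
    (ht : t ∈ Set.Icc (0:ℝ) 1) : ‖log (1 - w * t)‖ ≤ ‖w‖ / ε * t := by
  have hslit := one_sub_mul_ofReal_mem_slitPlane hε hε1 hw ht
  have hinv : ∀ s ∈ Ι (0:ℝ) 1, ‖(1 - s • (w * t))⁻¹‖ ≤ ε⁻¹ := by
    intro s hs
    rw [Set.uIoc_of_le zero_le_one] at hs
    have hst : s * t ∈ Set.Icc (0:ℝ) 1 :=
      ⟨mul_nonneg hs.1.le ht.1, mul_le_one₀ hs.2 ht.1 ht.2⟩
    rw [norm_inv, real_smul, mul_left_comm, ← ofReal_mul]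
    exact inv_anti₀ hε (le_norm_one_sub_mul_ofReal hε1 hw hst)
  rw [← norm_neg, ← log_inv _ (slitPlane_arg_ne_pi hslit), log_inv_eq_integral hslit, norm_mul,
    norm_mul, norm_real, Real.norm_of_nonneg ht.1]
  calc ‖w‖ * t * ‖∫ s in (0:ℝ)..1, (1 - s • (w * t))⁻¹‖ ≤ ‖w‖ * t * (ε⁻¹ * |1 - 0|) :=
        mul_le_mul_of_nonneg_left (intervalIntegral.norm_integral_le_of_norm_le_const hinv)
          (mul_nonneg (norm_nonneg w) ht.1)
    _ = ‖w‖ / ε * t := by rw [sub_zero, abs_one, mul_one]; ring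

theorem intervalIntegrable_log_one_sub_mul_ofReal_div (hε : 0 < ε) (hε1 : ε ≤ 1)
    (hw : w.re ≤ 1 - ε) : IntervalIntegrable (fun t : ℝ => log (1 - w * t) / t) volume 0 1 := by
  refine (intervalIntegrable_const (c := ‖w‖ / ε)).mono_fun'
    (Measurable.aestronglyMeasurable (by fun_prop)) ?_
  rw [Filter.EventuallyLE, ae_restrict_iff' measurableSet_uIoc]
  refine ae_of_all _ fun t ht => ?_
  rw [Set.uIoc_of_le zero_le_one] at ht
  rw [norm_div, norm_real, Real.norm_of_nonneg ht.1.le, div_le_iff₀ ht.1]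
  exact norm_log_one_sub_mul_ofReal_le hε hε1 hw (Set.Ioc_subset_Icc_self ht)

end

theorem exists_ball_re_le_one_sub {z : ℂ} (hz : z.re < 1) :
    ∃ ε > 0, ε ≤ 1 ∧ ∀ w ∈ Metric.ball z ε, w.re ≤ 1 - ε := by
  refine ⟨min 1 ((1 - z.re) / 2), lt_min one_pos (by linarith), min_le_left _ _, fun w hw => ?_⟩
  have hre := (re_le_norm (w - z)).trans (mem_ball_iff_norm.1 hw).le
  have := min_le_right 1 ((1 - z.re) / 2)
  rw [sub_re] at hre
  linarith

theorem hasDerivAt_log_one_sub_mul_ofReal_div {w : ℂ} {t : ℝ} (ht : t ≠ 0)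
    (hw : 1 - w * t ∈ slitPlane) :
    HasDerivAt (fun w => log (1 - w * t) / t) (-(1 - w * t)⁻¹) w := by
  refine (((hasDerivAt_mul_const (t : ℂ)).const_sub 1).clog hw).div_const _ |>.congr_deriv ?_
  field_simp [ofReal_ne_zero.2 ht, slitPlane_ne_zero hw]

theorem integral_inv_one_sub_mul_ofReal {z : ℂ} (hz : 1 - z ∈ slitPlane) (hz0 : z ≠ 0) :
    ∫ t in (0:ℝ)..1, (1 - z * t)⁻¹ = -log (1 - z) / z := by
  rw [eq_div_iff hz0, ← log_inv _ (slitPlane_arg_ne_pi hz), log_inv_eq_integral hz, mul_comm]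
  simp only [real_smul, mul_comm]

theorem hasDerivAt_Li2 {z : ℂ} (hz : z.re < 1) (hz0 : z ≠ 0) :
    HasDerivAt Li2 (-log (1 - z) / z) z := by
  obtain ⟨ε, hε, hε1, hball⟩ := exists_ball_re_le_one_sub hz
  have hbound : ∀ t ∈ Ι (0:ℝ) 1, ∀ w ∈ Metric.ball z ε, ‖-(1 - w * t)⁻¹‖ ≤ ε⁻¹ := by
    intro t ht w hw
    rw [Set.uIoc_of_le zero_le_one] at ht
    rw [norm_neg, norm_inv]
    exact inv_anti₀ hε (le_norm_one_sub_mul_ofReal hε1 (hball w hw) (Set.Ioc_subset_Icc_self ht))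
  have hdiff : ∀ t ∈ Ι (0:ℝ) 1, ∀ w ∈ Metric.ball z ε,
      HasDerivAt (fun w => log (1 - w * t) / t) (-(1 - w * t)⁻¹) w := by
    intro t ht w hw
    rw [Set.uIoc_of_le zero_le_one] at ht
    exact hasDerivAt_log_one_sub_mul_ofReal_div ht.1.ne'
      (one_sub_mul_ofReal_mem_slitPlane hε hε1 (hball w hw) (Set.Ioc_subset_Icc_self ht))
  obtain ⟨-, hderiv⟩ := hasDerivAt_integral_of_dominated_loc_of_deriv_le
    (F := fun w (t : ℝ) => log (1 - w * t) / t) (F' := fun w t => -(1 - w * t)⁻¹)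
    (bound := fun _ => ε⁻¹) (Metric.ball_mem_nhds z hε)
    (.of_forall fun w => Measurable.aestronglyMeasurable (by fun_prop))
    (intervalIntegrable_log_one_sub_mul_ofReal_div hε hε1 (hball z (Metric.mem_ball_self hε)))
    (by fun_prop) (ae_of_all _ hbound) intervalIntegrable_const (ae_of_all _ hdiff)
  have hslit : 1 - z ∈ slitPlane := mem_slitPlane_iff.2 (.inl (by simpa using hz))
  refine hderiv.neg.congr_deriv ?_
  rw [intervalIntegral.integral_neg, neg_neg, integral_inv_one_sub_mul_ofReal hslit hz0]

theorem hasDerivAt_im_Li2_exp_mul_I {θ : ℝ} (hθ : Real.cos θ < 1) :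
    HasDerivAt (fun θ : ℝ => (Li2 (exp (θ * I))).im) (-Real.log ‖1 - exp (θ * I)‖) θ := by
  have hexp : HasDerivAt (fun θ : ℝ => exp (θ * I)) (exp (θ * I) * I) θ :=
    ((hasDerivAt_mul_const I).cexp).comp_ofReal
  have hLi2 := (hasDerivAt_Li2 (by rwa [exp_ofReal_mul_I_re]) (exp_ne_zero _)).comp θ hexp
  refine (imCLM.hasFDerivAt.comp_hasDerivAt θ hLi2).congr_deriv ?_
  have hcancel : -log (1 - exp (θ * I)) / exp (θ * I) * (exp (θ * I) * I) =
      -(log (1 - exp (θ * I)) * I) := by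
    field_simp [exp_ne_zero]
  simp [hcancel, log_re]

theorem Real.cos_lt_one_of_mem_Ioo {θ : ℝ} (hθ : θ ∈ Set.Ioo 0 (2 * π)) : Real.cos θ < 1 :=
  (Real.cos_le_one θ).lt_of_ne fun h =>
    hθ.1.ne' ((Real.cos_eq_one_iff_of_lt_of_lt (by linarith [hθ.1, Real.pi_pos]) hθ.2).1 h)

theorem integral_log_norm_one_sub_exp_mul_I {a b : ℝ} (ha : a ∈ Set.Ioo 0 (2 * π))
    (hb : b ∈ Set.Ioo 0 (2 * π)) :
    ∫ θ in a..b, Real.log ‖1 - exp (θ * I)‖ = (Li2 (exp (a * I))).im - (Li2 (exp (b * I))).im := by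
  have hcos : ∀ θ ∈ Set.uIcc a b, Real.cos θ < 1 := fun θ hθ =>
    Real.cos_lt_one_of_mem_Ioo (Set.ordConnected_Ioo.uIcc_subset ha hb hθ)
  have hcont : ContinuousOn (fun θ : ℝ => Real.log ‖1 - exp (θ * I)‖) (Set.uIcc a b) := by
    refine ContinuousOn.log (by fun_prop) fun θ hθ => norm_ne_zero_iff.2 fun h => ?_
    have := congrArg re h
    simp only [sub_re, one_re, exp_ofReal_mul_I_re, zero_re] at this
    linarith [hcos θ hθ]
  rw [← neg_sub, ← integral_eq_sub_of_hasDerivAt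
    (fun θ hθ => hasDerivAt_im_Li2_exp_mul_I (hcos θ hθ)) hcont.neg.intervalIntegrable,
    intervalIntegral.integral_neg, neg_neg]

theorem blochWigner_of_norm_eq_one {z : ℂ} (hz : ‖z‖ = 1) : blochWigner z = (Li2 z).im := by
  rw [blochWigner, hz, Real.log_one, mul_zero, add_zero]

/-- `2π · m(x + y − 1) = D(e^{iπ/3}) − D(e^{−iπ/3})`. -/
theorem two_pi_mahler_eq_blochWigner :
    2 * π * mahlerMeasure2 (fun x y => x + y - 1) =
      blochWigner (Complex.exp ((π / 3 : ℝ) * Complex.I)) -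
        blochWigner (Complex.exp ((-(π / 3) : ℝ) * Complex.I)) := by
  have hπ := Real.pi_pos
  have hP : (fun x y : ℂ => x + y - 1) = fun x y => (x - 1) + y := by
    funext x y
    ring
  have hperiod : exp ((5 * π / 3 : ℝ) * I) = exp ((-(π / 3) : ℝ) * I) := by
    convert exp_mul_I_periodic ((-(π / 3) : ℝ) : ℂ) using 2
    push_cast
    ring
  rw [hP, mahlerMeasure2_add_right, ← mul_assoc, mul_inv_cancel₀ (by positivity), one_mul]
  simp_rw [norm_sub_rev _ (1 : ℂ)]
  rw [integral_posLog_norm_one_sub_exp_mul_I,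
    integral_log_norm_one_sub_exp_mul_I ⟨by positivity, by linarith⟩ ⟨by positivity, by linarith⟩,
    blochWigner_of_norm_eq_one (norm_exp_ofReal_mul_I _),
    blochWigner_of_norm_eq_one (norm_exp_ofReal_mul_I _), hperiod]
end

section
/- Let z₀, z₁, z₂, z₃, z₄ be complex numbers, all different from 0 and 1, satisfying the five cyclic equations 1 − z₁ = z₂z₀, 1 − z₂ = z₃z₁, 1 − z₃ = z₄z₂, 1 − z₄ = z₀z₃, 1 − z₀ = z₁z₄. Then z₀ ∧ (1−z₀) + z₁ ∧ (1−z₁) + z₂ ∧ (1−z₂) + z₃ ∧ (1−z₃) + z₄ ∧ (1−z₄) = 0 in the second exterior power ⋀² ℂ* of the multiplicative group of ℂ. -/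
/-- The wedge `a ∧ b` of two units of `ℂ`, viewed inside the exterior algebra over `ℤ`
of the multiplicative group `ℂ*` (written additively); the degree-two part of this
exterior algebra is `⋀² ℂ*`. -/
noncomputable def wedgeUnits (a b : ℂˣ) : ExteriorAlgebra ℤ (Additive ℂˣ) :=
  ExteriorAlgebra.ι ℤ (Additive.ofMul a) * ExteriorAlgebra.ι ℤ (Additive.ofMul b)

/-- The wedge `z ∧ (1 − z)` for `z ∈ ℂ`, `z ≠ 0, 1`. -/
noncomputable def wedgeStd (z : ℂ) (h0 : z ≠ 0) (h1 : z ≠ 1) :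
    ExteriorAlgebra ℤ (Additive ℂˣ) :=
  wedgeUnits (Units.mk0 z h0) (Units.mk0 (1 - z) (sub_ne_zero_of_ne (Ne.symm h1)))

/-- If `z₀, …, z₄ ∈ ℂ ∖ {0, 1}` satisfy the cyclic equations `1 − z_{i+1} = z_{i+2} z_i`
(indices mod 5), then `∑ᵢ zᵢ ∧ (1 − zᵢ) = 0` in `⋀² ℂ*`. -/
theorem five_term_wedge_cyclic (z₀ z₁ z₂ z₃ z₄ : ℂ)
    (h₀ : z₀ ≠ 0) (h₁ : z₁ ≠ 0) (h₂ : z₂ ≠ 0) (h₃ : z₃ ≠ 0) (h₄ : z₄ ≠ 0)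
    (h₀' : z₀ ≠ 1) (h₁' : z₁ ≠ 1) (h₂' : z₂ ≠ 1) (h₃' : z₃ ≠ 1) (h₄' : z₄ ≠ 1)
    (e₁ : 1 - z₁ = z₂ * z₀) (e₂ : 1 - z₂ = z₃ * z₁) (e₃ : 1 - z₃ = z₄ * z₂)
    (e₄ : 1 - z₄ = z₀ * z₃) (e₀ : 1 - z₀ = z₁ * z₄) :
    wedgeStd z₀ h₀ h₀' + wedgeStd z₁ h₁ h₁' + wedgeStd z₂ h₂ h₂' +
      wedgeStd z₃ h₃ h₃' + wedgeStd z₄ h₄ h₄' = 0 := by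
  set u₀ := Units.mk0 z₀ h₀
  set u₁ := Units.mk0 z₁ h₁
  set u₂ := Units.mk0 z₂ h₂
  set u₃ := Units.mk0 z₃ h₃
  set u₄ := Units.mk0 z₄ h₄
  have k₀ : Units.mk0 (1 - z₀) (sub_ne_zero_of_ne (Ne.symm h₀')) = u₁ * u₄ := by
    ext; simp [e₀, u₁, u₄]
  have k₁ : Units.mk0 (1 - z₁) (sub_ne_zero_of_ne (Ne.symm h₁')) = u₂ * u₀ := by
    ext; simp [e₁, u₂, u₀]
  have k₂ : Units.mk0 (1 - z₂) (sub_ne_zero_of_ne (Ne.symm h₂')) = u₃ * u₁ := by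
    ext; simp [e₂, u₃, u₁]
  have k₃ : Units.mk0 (1 - z₃) (sub_ne_zero_of_ne (Ne.symm h₃')) = u₄ * u₂ := by
    ext; simp [e₃, u₄, u₂]
  have k₄ : Units.mk0 (1 - z₄) (sub_ne_zero_of_ne (Ne.symm h₄')) = u₀ * u₃ := by
    ext; simp [e₄, u₀, u₃]
  set a₀ := ExteriorAlgebra.ι ℤ (Additive.ofMul u₀)
  set a₁ := ExteriorAlgebra.ι ℤ (Additive.ofMul u₁)
  set a₂ := ExteriorAlgebra.ι ℤ (Additive.ofMul u₂)
  set a₃ := ExteriorAlgebra.ι ℤ (Additive.ofMul u₃)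
  set a₄ := ExteriorAlgebra.ι ℤ (Additive.ofMul u₄)
  have swap : ∀ x y : Additive ℂˣ,
      ExteriorAlgebra.ι ℤ x * ExteriorAlgebra.ι ℤ y =
        -(ExteriorAlgebra.ι ℤ y * ExteriorAlgebra.ι ℤ x) := fun x y =>
    eq_neg_of_add_eq_zero_left (ExteriorAlgebra.ι_add_mul_swap x y)
  simp only [wedgeStd, wedgeUnits, k₀, k₁, k₂, k₃, k₄, ofMul_mul, map_add, mul_add]
  rw [swap (Additive.ofMul u₁) (Additive.ofMul u₀),
      swap (Additive.ofMul u₂) (Additive.ofMul u₁),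
      swap (Additive.ofMul u₃) (Additive.ofMul u₂),
      swap (Additive.ofMul u₄) (Additive.ofMul u₃),
      swap (Additive.ofMul u₄) (Additive.ofMul u₀)]
  abel
end

section
/- Let u, v ∈ ℂ satisfy v² + uv + v = u³ − u, and suppose u, v, and u+1 are all nonzero. Set x = v + 1, y = u(u+1)/v, z₁ = −u, z₂ = (u+v)/u², z₃ = (v+1)/u², and assume x ≠ 0, y ≠ 0 and zⱼ ∉ {0, 1} for j = 1, 2, 3. Then x ∧ y = z₁ ∧ (1−z₁) + z₂ ∧ (1−z₂) + z₃ ∧ (1−z₃) in (⋀² ℂ*) ⊗ ℚ. -/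
open scoped TensorProduct

/-!
On the curve `v² + uv + v = u³ − u` all of `x, y, zⱼ, 1 − zⱼ` are products of powers of
`−1, u, v, u + 1, u + v`: the curve equation says `(v + 1)(u + v) = u³` and
`(u² − u − v)(u + 1) = v²`, which gives `x = u³/(u+v)`, `1 − z₂ = v²/(u²(u+1))`,
`z₃ = u/(u+v)` and `1 − z₃ = v/(u+v)`. Expanding bilinearly, both sides then agree
in `⋀² ℂ*` up to the term `(−1) ∧ (u+1)`, which is `2`-torsion and dies after `⊗ ℚ`.
-/

lemma tmul_rat_eq_zero_of_zsmul_eq_zero {M : Type*} [AddCommGroup M] {m : M} {n : ℤ}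
    (hn : n ≠ 0) (h : n • m = 0) (q : ℚ) : m ⊗ₜ[ℤ] q = 0 :=
  calc m ⊗ₜ[ℤ] q = m ⊗ₜ[ℤ] (n • (q / n)) := by
        rw [zsmul_eq_mul, mul_div_cancel₀ q (Int.cast_ne_zero.mpr hn)]
    _ = (n • m) ⊗ₜ[ℤ] (q / n) := (TensorProduct.smul_tmul _ _ _).symm
    _ = 0 := by rw [h, TensorProduct.zero_tmul]

lemma wedgeUnits_mul_left (a b c : ℂˣ) :
    wedgeUnits (a * b) c = wedgeUnits a c + wedgeUnits b c := by
  simp only [wedgeUnits, ofMul_mul, map_add, add_mul]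

lemma wedgeUnits_mul_right (a b c : ℂˣ) :
    wedgeUnits a (b * c) = wedgeUnits a b + wedgeUnits a c := by
  simp only [wedgeUnits, ofMul_mul, map_add, mul_add]

lemma wedgeUnits_inv_left (a b : ℂˣ) : wedgeUnits a⁻¹ b = -wedgeUnits a b := by
  simp only [wedgeUnits, ofMul_inv, map_neg, neg_mul]

lemma wedgeUnits_inv_right (a b : ℂˣ) : wedgeUnits a b⁻¹ = -wedgeUnits a b := by
  simp only [wedgeUnits, ofMul_inv, map_neg, mul_neg]

lemma wedgeUnits_one_left (a : ℂˣ) : wedgeUnits 1 a = 0 := by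
  simp only [wedgeUnits, ofMul_one, map_zero, zero_mul]

lemma wedgeUnits_self (a : ℂˣ) : wedgeUnits a a = 0 :=
  ExteriorAlgebra.ι_sq_zero _

lemma wedgeUnits_comm (a b : ℂˣ) : wedgeUnits b a = -wedgeUnits a b :=
  eq_neg_of_add_eq_zero_right (ExteriorAlgebra.ι_add_mul_swap _ _)

lemma two_zsmul_wedgeUnits_neg_one (a : ℂˣ) : (2 : ℤ) • wedgeUnits (-1) a = 0 := by
  rw [two_zsmul, ← wedgeUnits_mul_left, neg_one_mul, neg_neg, wedgeUnits_one_left]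

lemma wedgeUnits_mk0 {a b : ℂ} (ha : a ≠ 0) (hb : b ≠ 0) {A B : ℂˣ} (hA : a = A)
    (hB : b = B) : wedgeUnits (Units.mk0 a ha) (Units.mk0 b hb) = wedgeUnits A B := by
  congr <;> exact Units.ext ‹_›

lemma wedgeStd_eq_wedgeUnits {z : ℂ} (h0 : z ≠ 0) (h1 : z ≠ 1) {A B : ℂˣ} (hA : z = A)
    (hB : 1 - z = B) : wedgeStd z h0 h1 = wedgeUnits A B :=
  wedgeUnits_mk0 _ _ hA hB

lemma wedgeUnits_m009_identity (U V P W : ℂˣ) :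
    wedgeUnits (-1 * U) P + wedgeUnits (W * U⁻¹ * U⁻¹) (V * V * P⁻¹ * U⁻¹ * U⁻¹) +
        wedgeUnits (U * W⁻¹) (V * W⁻¹) =
      wedgeUnits (U * U * U * W⁻¹) (U * P * V⁻¹) + wedgeUnits (-1) P := by
  simp only [wedgeUnits_mul_left, wedgeUnits_mul_right, wedgeUnits_inv_left,
    wedgeUnits_inv_right, wedgeUnits_self, neg_neg, neg_zero, wedgeUnits_comm U W]
  abel

lemma sum_wedgeStd_m009 (u v : ℂ) (hE : v ^ 2 + u * v + v = u ^ 3 - u)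
    (hu : u ≠ 0) (hv : v ≠ 0) (hu1 : u + 1 ≠ 0)
    (hx : v + 1 ≠ 0) (hy : u * (u + 1) / v ≠ 0)
    (hz10 : -u ≠ 0) (hz11 : -u ≠ 1)
    (hz20 : (u + v) / u ^ 2 ≠ 0) (hz21 : (u + v) / u ^ 2 ≠ 1)
    (hz30 : (v + 1) / u ^ 2 ≠ 0) (hz31 : (v + 1) / u ^ 2 ≠ 1) :
    wedgeStd (-u) hz10 hz11 + wedgeStd ((u + v) / u ^ 2) hz20 hz21 +
        wedgeStd ((v + 1) / u ^ 2) hz30 hz31 =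
      wedgeUnits (Units.mk0 (v + 1) hx) (Units.mk0 (u * (u + 1) / v) hy) +
        wedgeUnits (-1) (Units.mk0 (u + 1) hu1) := by
  have hw : u + v ≠ 0 := fun h ↦ hz20 (by rw [h, zero_div])
  set U := Units.mk0 u hu
  set V := Units.mk0 v hv
  set P := Units.mk0 (u + 1) hu1
  set W := Units.mk0 (u + v) hw
  have hx' : v + 1 = ↑(U * U * U * W⁻¹) := by
    simp only [U, W, Units.val_mul, Units.val_inv_eq_inv_val, Units.val_mk0]
    field_simp
    linear_combination hE
  have hy' : u * (u + 1) / v = ↑(U * P * V⁻¹) := by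
    simp only [U, P, V, Units.val_mul, Units.val_inv_eq_inv_val, Units.val_mk0]
    field_simp
  have hz1 : -u = ↑(-1 * U) := by
    simp only [U, neg_one_mul, Units.val_neg, Units.val_mk0]
  have hz1' : 1 - -u = ↑P := by
    simp only [P, Units.val_mk0]
    ring
  have hz2 : (u + v) / u ^ 2 = ↑(W * U⁻¹ * U⁻¹) := by
    simp only [U, W, Units.val_mul, Units.val_inv_eq_inv_val, Units.val_mk0]
    field_simp
  have hz2' : 1 - (u + v) / u ^ 2 = ↑(V * V * P⁻¹ * U⁻¹ * U⁻¹) := by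
    simp only [U, V, P, Units.val_mul, Units.val_inv_eq_inv_val, Units.val_mk0]
    field_simp
    linear_combination -hE
  have hz3 : (v + 1) / u ^ 2 = ↑(U * W⁻¹) := by
    simp only [U, W, Units.val_mul, Units.val_inv_eq_inv_val, Units.val_mk0]
    field_simp
    linear_combination hE
  have hz3' : 1 - (v + 1) / u ^ 2 = ↑(V * W⁻¹) := by
    simp only [V, W, Units.val_mul, Units.val_inv_eq_inv_val, Units.val_mk0]
    field_simp
    linear_combination -hE
  rw [wedgeStd_eq_wedgeUnits hz10 hz11 hz1 hz1', wedgeStd_eq_wedgeUnits hz20 hz21 hz2 hz2',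
    wedgeStd_eq_wedgeUnits hz30 hz31 hz3 hz3', wedgeUnits_mk0 hx hy hx' hy']
  exact wedgeUnits_m009_identity U V P W

/-- On the elliptic curve `v² + uv + v = u³ − u`, with `x = v + 1`, `y = u(u+1)/v`,
`z₁ = −u`, `z₂ = (u+v)/u²`, `z₃ = (v+1)/u²`, one has the triangulation
`x ∧ y = ⟨z₁⟩ + ⟨z₂⟩ + ⟨z₃⟩` in `(⋀² ℂ*) ⊗ ℚ`. -/
theorem triangulation_m009 (u v : ℂ)
    (hE : v ^ 2 + u * v + v = u ^ 3 - u)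
    (hu : u ≠ 0) (hv : v ≠ 0) (hu1 : u + 1 ≠ 0)
    (hx : v + 1 ≠ 0) (hy : u * (u + 1) / v ≠ 0)
    (hz10 : -u ≠ 0) (hz11 : -u ≠ 1)
    (hz20 : (u + v) / u ^ 2 ≠ 0) (hz21 : (u + v) / u ^ 2 ≠ 1)
    (hz30 : (v + 1) / u ^ 2 ≠ 0) (hz31 : (v + 1) / u ^ 2 ≠ 1) :
    (wedgeUnits (Units.mk0 (v + 1) hx) (Units.mk0 (u * (u + 1) / v) hy)) ⊗ₜ[ℤ] (1 : ℚ) =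
      (wedgeStd (-u) hz10 hz11 +
        wedgeStd ((u + v) / u ^ 2) hz20 hz21 +
        wedgeStd ((v + 1) / u ^ 2) hz30 hz31) ⊗ₜ[ℤ] (1 : ℚ) := by
  rw [sum_wedgeStd_m009 u v hE hu hv hu1 hx hy hz10 hz11 hz20 hz21 hz30 hz31,
    TensorProduct.add_tmul,
    tmul_rat_eq_zero_of_zsmul_eq_zero two_ne_zero (two_zsmul_wedgeUnits_neg_one _), add_zero]
end

section
/- Let w ∈ ℂ and let f, g be meromorphic at w, neither identically zero near w, with orders a = ord_w(f) and b = ord_w(g). Then the meromorphic function z ↦ (−1)^{ab} f(z)^b / g(z)^a extends to a holomorphic, nonvanishing function at w; let T ∈ ℂ* be its value at w (the tame symbol (f,g)_w). Then lim_{r→0⁺} (1/(2π)) ∫₀^{2π} [ log|f(w + re^{iθ})| · Im( i·r·e^{iθ} · g'(w + re^{iθ})/g(w + re^{iθ}) ) − log|g(w + re^{iθ})| · Im( i·r·e^{iθ} · f'(w + re^{iθ})/f(w + re^{iθ}) ) ] dθ = log|T|; that is, the integral of the 1-form η(f,g) = log|f| d(arg g) − log|g| d(arg f) over a small positively oriented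 circle of radius r around w tends to 2π·log|(f,g)_w| as r → 0. -/
/-!
Write `f = (z - w)^a u` and `g = (z - w)^b v` with `u`, `v` holomorphic and nonvanishing at `w`.
Then `log|f| = a log|z - w| + log|u|` and `f'/f = a/(z - w) + u'/u`, and on the circle through `z`
the tangent vector is `i (z - w)`, so `d(arg f)` contributes `a` plus a term carrying a factor
`z - w`. Substituting into `η(f,g)`, the two terms `ab log|z - w|` cancel and what is left is
`b log|u| - a log|v|` plus terms carrying a factor `z - w` or `(z - w) log|z - w|`. This function
extends continuously across `w`, so its circle averages tend to its value at `w`, which is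
`b log|u(w)| - a log|v(w)| = log|T|`.
-/

open scoped Real
open Filter Complex Metric Set Topology

theorem continuous_log_norm_smul {E : Type*} [NormedAddCommGroup E] [NormedSpace ℝ E] :
    Continuous fun x : E => Real.log ‖x‖ • x := by
  refine continuous_iff_continuousAt.2 fun x => ?_
  rcases eq_or_ne x 0 with rfl | hx
  · have h := (Real.continuous_mul_log.comp continuous_norm).tendsto (0 : E)
    simp only [Function.comp_apply, norm_zero, zero_mul] at h
    rw [ContinuousAt, smul_zero, tendsto_zero_iff_norm_tendsto_zero]
    simpa [norm_smul, mul_comm] using h.norm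
  · exact ((Real.continuousAt_log (norm_ne_zero_iff.2 hx)).comp
      continuous_norm.continuousAt).smul continuousAt_id

theorem tendsto_circleAverage_of_eventuallyEq_nhdsNE {E : Type*} [NormedAddCommGroup E]
    [NormedSpace ℝ E] [CompleteSpace E] {f F : ℂ → E} {c : ℂ}
    (hfF : f =ᶠ[𝓝[≠] c] F) (hF : ∀ᶠ z in 𝓝 c, ContinuousAt F z) :
    Tendsto (Real.circleAverage f c) (𝓝[>] 0) (𝓝 (F c)) := by
  obtain ⟨ε, hε, hball⟩ :=
    Metric.eventually_nhds_iff_ball.1 (hF.and (eventually_nhdsWithin_iff.1 hfF))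
  have hcont : ContinuousOn (Real.circleAverage F c) (Ico 0 ε) :=
    Real.ContinuousOn.circleAverage
      (fun z hz => (hball z (mem_ball_iff_norm.2 hz.2)).1.continuousWithinAt) fun r hr => hr.1
  have hlim : Tendsto (Real.circleAverage F c) (𝓝[>] 0) (𝓝 (F c)) := by
    rw [← Real.circleAverage_zero (f := F) (c := c)]
    exact (hcont 0 ⟨le_rfl, hε⟩).tendsto.mono_left (nhdsWithin_le_of_mem (Ico_mem_nhdsGT hε))
  refine hlim.congr' (eventuallyEq_of_mem (Ioo_mem_nhdsGT hε) fun r hr => ?_)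
  refine Real.circleAverage_congr_sphere fun z hz => ?_
  have hzc : dist z c = r := by rw [mem_sphere.1 hz, abs_of_pos hr.1]
  refine ((hball z ?_).2 ?_).symm
  · rw [mem_ball, hzc]; exact hr.2
  · rintro rfl
    rw [dist_self] at hzc
    exact hr.1.ne hzc

theorem logDeriv_zpow_sub_mul {𝕜 : Type*} [NontriviallyNormedField 𝕜] {u : 𝕜 → 𝕜} {w z : 𝕜}
    (n : ℤ) (hzw : z ≠ w) (hu : DifferentiableAt 𝕜 u z) (hu0 : u z ≠ 0) :
    logDeriv (fun y => (y - w) ^ n * u y) z = n / (z - w) + logDeriv u z := by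
  have hc : z - w ≠ 0 := sub_ne_zero.2 hzw
  have hd : DifferentiableAt 𝕜 (fun y => y - w) z := differentiableAt_id.sub_const w
  rw [logDeriv_mul (f := fun y => (y - w) ^ n) z (zpow_ne_zero n hc) hu0 (hd.zpow (.inl hc)) hu,
    logDeriv_fun_zpow hd n, logDeriv_apply, deriv_sub_const, deriv_id'', mul_one_div]

theorem AnalyticAt.continuousAt_logDeriv {u : ℂ → ℂ} {z : ℂ} (hu : AnalyticAt ℂ u z)
    (hu0 : u z ≠ 0) : ContinuousAt (logDeriv u) z :=
  hu.deriv.continuousAt.div hu.continuousAt hu0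

/-- The 1-form `η(f,g) = log|f| d(arg g) - log|g| d(arg f)` at `z`, evaluated on `i (z - w)`, the
velocity at `z` of the circle `θ ↦ w + r e^{iθ}`. -/
noncomputable def etaForm (f g : ℂ → ℂ) (w z : ℂ) : ℝ :=
  Real.log ‖f z‖ * (I * (z - w) * logDeriv g z).im -
    Real.log ‖g z‖ * (I * (z - w) * logDeriv f z).im

/-- The expansion of `etaForm ((· - w)^a u) ((· - w)^b v) w`; the singular terms `ab log|z - w|`
cancel, so this is continuous at `w`. -/
noncomputable def etaRegularPart (u v : ℂ → ℂ) (a b : ℤ) (w z : ℂ) : ℝ :=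
  b * Real.log ‖u z‖ - a * Real.log ‖v z‖ + etaForm u v w z +
    (I * (Real.log ‖z - w‖ • (z - w)) * (a * logDeriv v z - b * logDeriv u z)).im

section LocalFactorization

variable {f g u v : ℂ → ℂ} {w z : ℂ} {a b : ℤ}

theorem continuousAt_etaForm (hu : AnalyticAt ℂ u z) (hv : AnalyticAt ℂ v z) (hu0 : u z ≠ 0)
    (hv0 : v z ≠ 0) : ContinuousAt (etaForm u v w) z := by
  have hlu := hu.continuousAt.norm.log (norm_ne_zero_iff.2 hu0)
  have hlv := hv.continuousAt.norm.log (norm_ne_zero_iff.2 hv0)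
  have hdu := hu.continuousAt_logDeriv hu0
  have hdv := hv.continuousAt_logDeriv hv0
  unfold etaForm
  fun_prop

theorem continuousAt_etaRegularPart (hu : AnalyticAt ℂ u z) (hv : AnalyticAt ℂ v z)
    (hu0 : u z ≠ 0) (hv0 : v z ≠ 0) : ContinuousAt (etaRegularPart u v a b w) z := by
  have hlu := hu.continuousAt.norm.log (norm_ne_zero_iff.2 hu0)
  have hlv := hv.continuousAt.norm.log (norm_ne_zero_iff.2 hv0)
  have hdu := hu.continuousAt_logDeriv hu0
  have hdv := hv.continuousAt_logDeriv hv0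
  have hη := continuousAt_etaForm (w := w) hu hv hu0 hv0
  have hlog := (continuous_log_norm_smul.comp (continuous_sub_right w)).continuousAt (x := z)
  exact (((continuousAt_const.mul hlu).sub (continuousAt_const.mul hlv)).add hη).add
    (Complex.continuous_im.continuousAt.comp ((continuousAt_const.mul hlog).mul
      ((continuousAt_const.mul hdv).sub (continuousAt_const.mul hdu))))

theorem etaRegularPart_self (hu0 : u w ≠ 0) (hv0 : v w ≠ 0) :
    etaRegularPart u v a b w w = Real.log ‖(-1 : ℂ) ^ (a * b) * u w ^ b / v w ^ a‖ := by
  rw [norm_div, norm_mul, norm_zpow, norm_zpow, norm_zpow, norm_neg, norm_one, one_zpow, one_mul,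
    Real.log_div (zpow_ne_zero _ (norm_ne_zero_iff.2 hu0))
      (zpow_ne_zero _ (norm_ne_zero_iff.2 hv0)), Real.log_zpow, Real.log_zpow]
  simp [etaRegularPart, etaForm]

theorem etaForm_eq_etaRegularPart (hzw : z ≠ w)
    (hf : f =ᶠ[𝓝 z] fun y => (y - w) ^ a * u y) (hg : g =ᶠ[𝓝 z] fun y => (y - w) ^ b * v y)
    (hu : DifferentiableAt ℂ u z) (hv : DifferentiableAt ℂ v z) (hu0 : u z ≠ 0) (hv0 : v z ≠ 0) :
    etaForm f g w z = etaRegularPart u v a b w z := by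
  have hc : z - w ≠ 0 := sub_ne_zero.2 hzw
  have hlog {n : ℤ} {U : ℂ → ℂ} (hU0 : U z ≠ 0) :
      Real.log ‖(z - w) ^ n * U z‖ = n * Real.log ‖z - w‖ + Real.log ‖U z‖ := by
    rw [norm_mul, norm_zpow, Real.log_mul (zpow_ne_zero _ (norm_ne_zero_iff.2 hc))
      (norm_ne_zero_iff.2 hU0), Real.log_zpow]
  unfold etaRegularPart etaForm
  rw [hf.eq_of_nhds, hg.eq_of_nhds, (logDeriv_congr_nhds hf).eq_of_nhds,
    (logDeriv_congr_nhds hg).eq_of_nhds, logDeriv_zpow_sub_mul a hzw hu hu0,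
    logDeriv_zpow_sub_mul b hzw hv hv0, hlog hu0, hlog hv0]
  have hI (n : ℤ) (X : ℂ) : (I * (z - w) * (n / (z - w) + X)).im = n + (I * (z - w) * X).im := by
    have hn : I * (z - w) * (n / (z - w)) = n * I := by field_simp
    simp [mul_add, hn]
  rw [hI, hI]
  simp only [Complex.real_smul, Complex.mul_im, Complex.mul_re, Complex.sub_im, Complex.sub_re,
    Complex.ofReal_re, Complex.ofReal_im, Complex.I_re, Complex.I_im, Complex.intCast_re,
    Complex.intCast_im]
  ring

theorem etaForm_eventuallyEq_etaRegularPart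
    (hfu : ∀ᶠ z in 𝓝[≠] w, f z = (z - w) ^ a • u z) (hgv : ∀ᶠ z in 𝓝[≠] w, g z = (z - w) ^ b • v z)
    (hu : AnalyticAt ℂ u w) (hv : AnalyticAt ℂ v w) (hu0 : u w ≠ 0) (hv0 : v w ≠ 0) :
    etaForm f g w =ᶠ[𝓝[≠] w] etaRegularPart u v a b w := by
  have hnhds {h U : ℂ → ℂ} {n : ℤ} (hhU : ∀ᶠ z in 𝓝[≠] w, h z = (z - w) ^ n • U z) :
      ∀ᶠ z in 𝓝[≠] w, h =ᶠ[𝓝 z] fun y => (y - w) ^ n * U y := by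
    filter_upwards [eventually_eventually_nhdsWithin.2 hhU, self_mem_nhdsWithin] with z hz hzw
    rwa [isOpen_compl_singleton.nhdsWithin_eq hzw] at hz
  filter_upwards [hnhds hfu, hnhds hgv, self_mem_nhdsWithin,
    nhdsWithin_le_nhds (hu.eventually_analyticAt.and (hu.continuousAt.eventually_ne hu0)),
    nhdsWithin_le_nhds (hv.eventually_analyticAt.and (hv.continuousAt.eventually_ne hv0))]
    with z hfz hgz hzw huz hvz
  exact etaForm_eq_etaRegularPart hzw hfz hgz huz.1.differentiableAt hvz.1.differentiableAt
    huz.2 hvz.2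

theorem eventually_continuousAt_etaRegularPart (hu : AnalyticAt ℂ u w) (hv : AnalyticAt ℂ v w)
    (hu0 : u w ≠ 0) (hv0 : v w ≠ 0) : ∀ᶠ z in 𝓝 w, ContinuousAt (etaRegularPart u v a b w) z := by
  filter_upwards [hu.eventually_analyticAt, hv.eventually_analyticAt,
    hu.continuousAt.eventually_ne hu0, hv.continuousAt.eventually_ne hv0] with z huz hvz huz0 hvz0
  exact continuousAt_etaRegularPart huz hvz huz0 hvz0

theorem tendsto_tame_of_eventuallyEq
    (hfu : ∀ᶠ z in 𝓝[≠] w, f z = (z - w) ^ a • u z) (hgv : ∀ᶠ z in 𝓝[≠] w, g z = (z - w) ^ b • v z)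
    (hu : ContinuousAt u w) (hv : ContinuousAt v w) (hu0 : u w ≠ 0) (hv0 : v w ≠ 0) :
    Tendsto (fun z => (-1 : ℂ) ^ (a * b) * f z ^ b / g z ^ a) (𝓝[≠] w)
      (𝓝 ((-1 : ℂ) ^ (a * b) * u w ^ b / v w ^ a)) := by
  have hlim : Tendsto (fun z => (-1 : ℂ) ^ (a * b) * u z ^ b / v z ^ a) (𝓝[≠] w)
      (𝓝 ((-1 : ℂ) ^ (a * b) * u w ^ b / v w ^ a)) :=
    ((continuousAt_const.mul (hu.zpow₀ b (.inl hu0))).div (hv.zpow₀ a (.inl hv0))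
      (zpow_ne_zero a hv0)).tendsto.mono_left nhdsWithin_le_nhds
  refine hlim.congr' ?_
  filter_upwards [hfu, hgv, self_mem_nhdsWithin] with z hfz hgz hzw
  have hzab : (z - w) ^ (a * b) ≠ 0 := zpow_ne_zero _ (sub_ne_zero.2 hzw)
  rw [hfz, hgz, smul_eq_mul, smul_eq_mul, mul_zpow, mul_zpow, ← zpow_mul, ← zpow_mul, mul_comm b a,
    mul_div_assoc, mul_div_assoc, mul_div_mul_left _ _ hzab]

end LocalFactorization

theorem eta_circle_integral_tendsto_log_tame_symbol_general
    (f g : ℂ → ℂ) (w : ℂ) (a b : ℤ)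
    (hf : MeromorphicAt f w) (hg : MeromorphicAt g w)
    (ha : meromorphicOrderAt f w = (a : WithTop ℤ)) (hb : meromorphicOrderAt g w = (b : WithTop ℤ))
    (T : ℂ)
    (hTval : Tendsto (fun z => (-1 : ℂ) ^ (a * b) * (f z) ^ b / (g z) ^ a)
      (nhdsWithin w {w}ᶜ) (nhds T)) :
    Tendsto (fun r : ℝ =>
        (1 / (2 * π)) * ∫ θ in (0:ℝ)..(2 * π),
          (Real.log ‖f (w + r * Complex.exp (θ * Complex.I))‖ *
              (Complex.I * r * Complex.exp (θ * Complex.I) *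
                deriv g (w + r * Complex.exp (θ * Complex.I)) /
                  g (w + r * Complex.exp (θ * Complex.I))).im -
            Real.log ‖g (w + r * Complex.exp (θ * Complex.I))‖ *
              (Complex.I * r * Complex.exp (θ * Complex.I) *
                deriv f (w + r * Complex.exp (θ * Complex.I)) /
                  f (w + r * Complex.exp (θ * Complex.I))).im))
      (nhdsWithin 0 (Set.Ioi 0)) (nhds (Real.log ‖T‖)) := by
  obtain ⟨u, hu, hu0, hfu⟩ := (meromorphicOrderAt_eq_int_iff hf).1 ha
  obtain ⟨v, hv, hv0, hgv⟩ := (meromorphicOrderAt_eq_int_iff hg).1 hb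
  have hT : T = (-1 : ℂ) ^ (a * b) * u w ^ b / v w ^ a := tendsto_nhds_unique hTval
    (tendsto_tame_of_eventuallyEq hfu hgv hu.continuousAt hv.continuousAt hu0 hv0)
  have hη := tendsto_circleAverage_of_eventuallyEq_nhdsNE
    (etaForm_eventuallyEq_etaRegularPart hfu hgv hu hv hu0 hv0)
    (eventually_continuousAt_etaRegularPart hu hv hu0 hv0)
  rw [etaRegularPart_self hu0 hv0, ← hT] at hη
  refine hη.congr fun r => ?_
  simp only [Real.circleAverage, circleMap, etaForm, logDeriv_apply, add_sub_cancel_left, one_div,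
    smul_eq_mul, mul_div_assoc, mul_assoc]

/-- Integrating the 1-form `η(f,g) = log|f| d(arg g) − log|g| d(arg f)` over a small
positively oriented circle around `w` recovers the tame symbol: if `f, g` are meromorphic
at `w`, not identically zero near `w`, with orders `a = ord_w(f)`, `b = ord_w(g)`, and if
`T ≠ 0` is the value at `w` of the (holomorphic, nonvanishing) extension of
`z ↦ (−1)^{ab} f(z)^b / g(z)^a`, then
`(1/2π) ∫₀^{2π} [log|f| · Im(i r e^{iθ} g'/g) − log|g| · Im(i r e^{iθ} f'/f)] dθ → log|T|`
as `r → 0⁺`. -/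
theorem eta_circle_integral_tendsto_log_tame_symbol
    (f g : ℂ → ℂ) (w : ℂ) (a b : ℤ)
    (hf : MeromorphicAt f w) (hg : MeromorphicAt g w)
    (ha : meromorphicOrderAt f w = (a : WithTop ℤ)) (hb : meromorphicOrderAt g w = (b : WithTop ℤ))
    (T : ℂ) (hT : T ≠ 0)
    (hTval : Tendsto (fun z => (-1 : ℂ) ^ (a * b) * (f z) ^ b / (g z) ^ a)
      (nhdsWithin w {w}ᶜ) (nhds T)) :
    Tendsto (fun r : ℝ =>
        (1 / (2 * π)) * ∫ θ in (0:ℝ)..(2 * π),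
          (Real.log ‖f (w + r * Complex.exp (θ * Complex.I))‖ *
              (Complex.I * r * Complex.exp (θ * Complex.I) *
                deriv g (w + r * Complex.exp (θ * Complex.I)) /
                  g (w + r * Complex.exp (θ * Complex.I))).im -
            Real.log ‖g (w + r * Complex.exp (θ * Complex.I))‖ *
              (Complex.I * r * Complex.exp (θ * Complex.I) *
                deriv f (w + r * Complex.exp (θ * Complex.I)) /
                  f (w + r * Complex.exp (θ * Complex.I))).im))
      (nhdsWithin 0 (Set.Ioi 0)) (nhds (Real.log ‖T‖)) :=
  eta_circle_integral_tendsto_log_tame_symbol_general f g w a b hf hg ha hb T hTval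
end
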